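/- arXiv:1508.00938 — 2 statements merged into one kernel-verified Lean document; each statement's English description precedes it below -/
import Mathlib

section
/- Transversality of the logical Y operator: let n be an odd positive integer and let U be the n-qubit encoding unitary. Then U†·(Y ⊗ I^{⊗(n−1)})·U = i^{1−n}·Y^{⊗n}. In particular, if n ≡ 1 (mod 4), then U†·(Y ⊗ I^{⊗(n−1)})·U = Y^{⊗n} and also U·(Y ⊗ I^{⊗(n−1)})·U† = Y^{⊗n}. -/
open Matrix

noncomputable section

/-- States of `n` qubits. -/
abbrev NState (n : ℕ) := Fin n → Fin 2

/-- Operators on `n` qubits. -/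
abbrev NMat (n : ℕ) := Matrix (NState n) (NState n) ℂ

/-- The Pauli `X` matrix. -/
def Xmat : Matrix (Fin 2) (Fin 2) ℂ := !![0, 1; 1, 0]

/-- The Pauli `Z` matrix. -/
def Zmat : Matrix (Fin 2) (Fin 2) ℂ := !![1, 0; 0, -1]

/-- The CNOT gate on `n` qubits with control qubit `c` and target qubit `t`:
the permutation matrix mapping the basis state `f` to `f` updated at `t` to
`f t + f c` (mod 2). -/
def nCNOT {n : ℕ} (c t : Fin n) : NMat n :=
  fun g f => if g = Function.update f t (f t + f c) then 1 else 0

/-- The `n`-qubit encoding unitary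
`U = (C_{1→2}·C_{1→3} ⋯ C_{1→n})·(C_{2→1}·C_{3→1} ⋯ C_{n→1})` (qubits 1-indexed). -/
def encU (n : ℕ) (hn : 0 < n) : NMat n :=
  (((List.finRange n).map fun j =>
      if j = ⟨0, hn⟩ then 1 else nCNOT ⟨0, hn⟩ j).prod) *
  (((List.finRange n).map fun j =>
      if j = ⟨0, hn⟩ then 1 else nCNOT j ⟨0, hn⟩).prod)

/-- `G ⊗ I^{⊗(n−1)}`: the single-qubit gate `G` acting on qubit 1, tensored with the
identity on qubits `2,…,n`. -/
def onFirst {n : ℕ} (hn : 0 < n) (G : Matrix (Fin 2) (Fin 2) ℂ) : NMat n :=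
  fun g f => G (g ⟨0, hn⟩) (f ⟨0, hn⟩) *
    (if ∀ j : Fin n, j ≠ ⟨0, hn⟩ → g j = f j then 1 else 0)

/-- `G^{⊗n}`: the `n`-fold Kronecker power of the single-qubit gate `G`. -/
def kronPow {n : ℕ} (G : Matrix (Fin 2) (Fin 2) ℂ) : NMat n :=
  fun g f => ∏ j : Fin n, G (g j) (f j)


/-- The Pauli `Y` matrix. -/
def Ymat : Matrix (Fin 2) (Fin 2) ℂ := !![0, -Complex.I; Complex.I, 0]

/-!
Write `𝟙` for the all-ones state and `e₀` for the state flipping only the first qubit. The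
encoder is the permutation matrix of `E f = (∑ f, f₁ + ∑ f, …, fₙ₋₁ + ∑ f)`, and for odd `n`
its inverse is `D g = (∑ g, g₁ + g₀, …, gₙ₋₁ + g₀)`. Both maps `σ` turn a flip of all qubits
into a flip of the first one, `σ (f + 𝟙) = σ f + e₀`, and put the parity of `f` on the first
qubit, `(σ f)₀ = ∑ f`. Hence the entry `(g, f)` of `σ`-conjugated `Y ⊗ I` vanishes unless
`g = f + 𝟙`, where it is `Y (∑ f + 1) (∑ f)`; since a product of factors `Y (a + 1) a` only
depends on the parity of the `a`'s, this is the entry of `Y^{⊗n}` up to the phase `i^{1-n}`.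
-/

open Function

section PermMatrix

variable {ι : Type*} [DecidableEq ι]

def permMat (T : ι → ι) : Matrix ι ι ℂ := fun i j => if i = T j then 1 else 0

theorem permMat_id : permMat (id : ι → ι) = 1 := by
  ext i j
  simp [permMat, Matrix.one_apply]

theorem permMat_comp [Fintype ι] (T S : ι → ι) : permMat (T ∘ S) = permMat T * permMat S := by
  ext i j
  simp [permMat, Matrix.mul_apply]

theorem permMat_foldr_comp [Fintype ι] (l : List (ι → ι)) :
    permMat (l.foldr (· ∘ ·) id) = (l.map permMat).prod := by
  induction l with
  | nil => exact permMat_id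
  | cons T l ih => rw [List.foldr_cons, permMat_comp, ih, List.map_cons, List.prod_cons]

theorem conjTranspose_permMat {T T' : ι → ι} (h₁ : LeftInverse T' T) (h₂ : RightInverse T' T) :
    (permMat T)ᴴ = permMat T' := by
  ext i j
  simp only [permMat, Matrix.conjTranspose_apply, apply_ite star, star_one, star_zero]
  exact if_congr ⟨fun h => h ▸ (h₁ i).symm, fun h => h ▸ (h₂ j).symm⟩ rfl rfl

theorem conjTranspose_permMat_mul_mul_permMat_apply [Fintype ι] (T : ι → ι) (M : Matrix ι ι ℂ)
    (i j : ι) : ((permMat T)ᴴ * M * permMat T) i j = M (T i) (T j) := by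
  simp [permMat, Matrix.mul_apply, Matrix.conjTranspose_apply]

end PermMatrix

section Encoder

variable {n : ℕ}

def cnot (c t : Fin n) (f : NState n) : NState n := f + Pi.single t (f c)

theorem nCNOT_eq_permMat (c t : Fin n) : nCNOT c t = permMat (cnot c t) := by
  have hupdate (f : NState n) : update f t (f t + f c) = f + Pi.single t (f c) := by
    funext k
    by_cases hk : k = t <;> simp [hk]
  ext g f
  simp only [nCNOT, permMat, cnot, hupdate]
  congr

theorem foldr_fanout_apply (z : Fin n) (l : List (Fin n)) (f : NState n) :
    (l.map fun j => if j = z then id else cnot z j).foldr (· ∘ ·) id f =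
      f + (l.map fun j => Pi.single j (if j = z then 0 else f z)).sum := by
  induction l with
  | nil => exact (add_zero f).symm
  | cons j l ih =>
    rw [List.map_cons, List.foldr_cons, Function.comp_apply, ih, List.map_cons, List.sum_cons]
    split_ifs with hj
    · rw [id, Pi.single_zero, zero_add]
    · have hz : (l.map fun j => Pi.single j (if j = z then 0 else f z)).sum z = 0 := by
        rw [Pi.list_sum_apply, List.map_map, List.sum_eq_zero]
        simp only [List.mem_map, Function.comp_apply]
        rintro _ ⟨i, -, rfl⟩
        by_cases hi : i = z
        · rw [if_pos hi, Pi.single_zero, Pi.zero_apply]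
        · exact Pi.single_eq_of_ne' hi _
      rw [cnot, Pi.add_apply, hz, add_zero]
      abel

theorem foldr_fanin_apply (z : Fin n) (l : List (Fin n)) (f : NState n) :
    (l.map fun j => if j = z then id else cnot j z).foldr (· ∘ ·) id f =
      f + Pi.single z (l.map fun j => if j = z then 0 else f j).sum := by
  induction l with
  | nil => simp
  | cons j l ih =>
    rw [List.map_cons, List.foldr_cons, Function.comp_apply, ih, List.map_cons, List.sum_cons]
    split_ifs with hj
    · rw [id, zero_add]
    · rw [cnot, Pi.add_apply, Pi.single_eq_of_ne hj, add_zero, Pi.single_add]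
      abel

def encodeState (z : Fin n) (f : NState n) : NState n :=
  fun k => (if k = z then 0 else f k) + ∑ j, f j

theorem add_sum_ite_eq_sum (z : Fin n) (f : NState n) :
    f z + ∑ j, (if j = z then 0 else f j) = ∑ j, f j := by
  rw [Fintype.sum_eq_add_sum_compl z f, Fintype.sum_eq_add_sum_compl z, if_pos rfl, zero_add]
  congr 1
  exact Finset.sum_congr rfl fun j hj => if_neg (Finset.mem_compl.mp hj ∘ Finset.mem_singleton.mpr)

theorem encU_eq_permMat (hn : 0 < n) : encU n hn = permMat (encodeState ⟨0, hn⟩) := by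
  simp only [encU, nCNOT_eq_permMat]
  set z : Fin n := ⟨0, hn⟩
  have hmap (C : Fin n → NState n → NState n) :
      (List.finRange n).map (fun j => if j = z then (1 : NMat n) else permMat (C j)) =
        ((List.finRange n).map fun j => if j = z then id else C j).map permMat := by
    simp only [List.map_map]
    exact List.map_congr_left fun j _ => by by_cases h : j = z <;> simp [h, permMat_id]
  rw [hmap, hmap, ← permMat_foldr_comp, ← permMat_foldr_comp, ← permMat_comp]
  congr 1
  funext f k
  simp only [Function.comp_apply, foldr_fanin_apply, foldr_fanout_apply, ← Fin.sum_univ_def]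
  rw [Finset.univ_sum_single]
  by_cases hk : k = z <;> simp [encodeState, hk, add_sum_ite_eq_sum]

end Encoder

section Parity

variable {n : ℕ}

theorem even_nsmul_fin_two {m : ℕ} (hm : Even m) (a : Fin 2) : m • a = 0 := by
  obtain ⟨k, rfl⟩ := hm
  rw [← two_mul, mul_nsmul, two_nsmul, show a + a = 0 by omega, nsmul_zero]

theorem odd_nsmul_fin_two {m : ℕ} (hm : Odd m) (a : Fin 2) : m • a = a := by
  obtain ⟨k, rfl⟩ := hm
  rw [add_nsmul, even_nsmul_fin_two (even_two_mul k), zero_add, one_nsmul]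

theorem sum_add_one (hodd : Odd n) (f : NState n) : ∑ j, (f j + 1) = ∑ j, f j + 1 := by
  simp [Finset.sum_add_distrib, odd_nsmul_fin_two hodd]

theorem sum_eq_of_forall_ne_eq_add (hodd : Odd n) (z : Fin n) {F f : NState n} {c : Fin 2}
    (h : ∀ k ≠ z, F k = f k + c) : ∑ k, F k = F z + ∑ k, f k + f z := by
  have hcompl : ∑ k ∈ {z}ᶜ, F k = ∑ k ∈ {z}ᶜ, f k := by
    rw [Finset.sum_congr rfl fun k hk => h k (by simpa using hk), Finset.sum_add_distrib,
      Finset.sum_const, Finset.card_compl, Finset.card_singleton, Fintype.card_fin,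
      even_nsmul_fin_two (Nat.Odd.sub_odd hodd odd_one), add_zero]
  rw [Fintype.sum_eq_add_sum_compl z F, Fintype.sum_eq_add_sum_compl z f, hcompl]
  omega

end Parity

section EncodeDecode

variable {n : ℕ}

def decodeState (z : Fin n) (g : NState n) : NState n :=
  fun k => if k = z then ∑ j, g j else g k + g z

theorem encodeState_apply_self (z : Fin n) (f : NState n) : encodeState z f z = ∑ j, f j := by
  simp [encodeState]

theorem decodeState_apply_self (z : Fin n) (g : NState n) : decodeState z g z = ∑ j, g j :=
  if_pos rfl

theorem encodeState_add_one (hodd : Odd n) (z : Fin n) (f : NState n) :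
    encodeState z (f + 1) = encodeState z f + Pi.single z 1 := by
  funext k
  by_cases hk : k = z
  · subst hk
    rw [encodeState_apply_self, Pi.add_apply, encodeState_apply_self, Pi.single_eq_same]
    exact sum_add_one hodd f
  · simp only [encodeState, hk, if_false, Pi.add_apply, Pi.one_apply, Pi.single_eq_of_ne hk,
      sum_add_one hodd]
    omega

theorem decodeState_add_one (hodd : Odd n) (z : Fin n) (g : NState n) :
    decodeState z (g + 1) = decodeState z g + Pi.single z 1 := by
  funext k
  by_cases hk : k = z
  · subst hk
    rw [decodeState_apply_self, Pi.add_apply, decodeState_apply_self, Pi.single_eq_same]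
    exact sum_add_one hodd g
  · simp only [decodeState, hk, Pi.add_apply, Pi.one_apply, Pi.single_eq_of_ne hk, if_false]
    omega

theorem sum_encodeState (hodd : Odd n) (z : Fin n) (f : NState n) :
    ∑ k, encodeState z f k = f z := by
  have hne : ∀ k ≠ z, encodeState z f k = f k + ∑ j, f j := fun k hk => by simp [encodeState, hk]
  rw [sum_eq_of_forall_ne_eq_add hodd z hne, encodeState_apply_self]
  omega

theorem sum_decodeState (hodd : Odd n) (z : Fin n) (g : NState n) :
    ∑ k, decodeState z g k = g z := by
  have hne : ∀ k ≠ z, decodeState z g k = g k + g z := fun k hk => by simp [decodeState, hk]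
  rw [sum_eq_of_forall_ne_eq_add hodd z hne, decodeState_apply_self]
  omega

theorem decodeState_encodeState (hodd : Odd n) (z : Fin n) :
    LeftInverse (decodeState z) (encodeState z) := by
  intro f
  funext k
  by_cases hk : k = z
  · subst hk
    rw [decodeState_apply_self, sum_encodeState hodd]
  · simp only [decodeState, encodeState, hk, ↓reduceIte]
    omega

theorem encodeState_decodeState (hodd : Odd n) (z : Fin n) :
    RightInverse (decodeState z) (encodeState z) := by
  intro g
  funext k
  by_cases hk : k = z
  · subst hk
    rw [encodeState_apply_self, sum_decodeState hodd]
  · simp only [encodeState, hk, if_false, sum_decodeState hodd]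
    simp only [decodeState, hk, if_false]
    omega

end EncodeDecode

theorem eq_or_eq_add_single_of_forall_ne {ι : Type*} [DecidableEq ι] {a b : ι → Fin 2} {z : ι}
    (h : ∀ k ≠ z, a k = b k) : a = b ∨ a = b + Pi.single z 1 := by
  by_cases hz : a z = b z
  · left
    funext k
    by_cases hk : k = z
    · rw [hk, hz]
    · exact h k hk
  · right
    funext k
    by_cases hk : k = z
    · subst hk
      rw [Pi.add_apply, Pi.single_eq_same]
      omega
    · rw [Pi.add_apply, Pi.single_eq_of_ne hk, add_zero, h k hk]

theorem onFirst_apply_of_flip {n : ℕ} (hn : 0 < n) (G : Matrix (Fin 2) (Fin 2) ℂ)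
    {σ : NState n → NState n} (hσ : Injective σ)
    (hflip : ∀ f, σ (f + 1) = σ f + Pi.single ⟨0, hn⟩ 1) (g f : NState n) :
    onFirst hn G (σ g) (σ f) =
      if g = f then G (σ f ⟨0, hn⟩) (σ f ⟨0, hn⟩)
      else if g = f + 1 then G (σ f ⟨0, hn⟩ + 1) (σ f ⟨0, hn⟩)
      else 0 := by
  by_cases hgf : g = f
  · rw [if_pos hgf, hgf, onFirst, if_pos fun _ _ => rfl, mul_one]
  rw [if_neg hgf]
  by_cases hg : g = f + 1
  · have hagree : ∀ j ≠ ⟨0, hn⟩, σ g j = σ f j := fun j hj => by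
      rw [hg, hflip, Pi.add_apply, Pi.single_eq_of_ne hj, add_zero]
    rw [if_pos hg, onFirst, if_pos hagree, mul_one, hg, hflip, Pi.add_apply, Pi.single_eq_same]
  · have hdisagree : ¬∀ j ≠ ⟨0, hn⟩, σ g j = σ f j := fun hagree => by
      rcases eq_or_eq_add_single_of_forall_ne hagree with h | h
      · exact hgf (hσ h)
      · exact hg (hσ (h.trans (hflip f).symm))
    rw [if_neg hg, onFirst, if_neg hdisagree, mul_zero]

section PauliY

open Complex

theorem Ymat_self (a : Fin 2) : Ymat a a = 0 := by
  fin_cases a <;> simp [Ymat]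

theorem Ymat_add_one_mul (a b : Fin 2) :
    Ymat (a + 1) a * Ymat (b + 1) b = I * Ymat (a + b + 1) (a + b) := by
  fin_cases a <;> fin_cases b <;> simp [Ymat]

-- The factor `I` on the left is what makes the empty product fit the formula.
theorem mul_prod_Ymat_add_one {ι : Type*} (s : Finset ι) (f : ι → Fin 2) :
    I * ∏ j ∈ s, Ymat (f j + 1) (f j) = I ^ s.card * Ymat (∑ j ∈ s, f j + 1) (∑ j ∈ s, f j) := by
  induction s using Finset.cons_induction with
  | empty => simp [Ymat]
  | cons a s ha ih =>
    rw [Finset.prod_cons, mul_left_comm, ih, Finset.card_cons, Finset.sum_cons, mul_left_comm,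
      Ymat_add_one_mul, pow_succ, mul_assoc, add_assoc]

variable {n : ℕ}

theorem kronPow_Ymat_eq_zero {g f : NState n} (h : g ≠ f + 1) : kronPow Ymat g f = 0 := by
  obtain ⟨j, hj⟩ := Function.ne_iff.mp h
  refine Finset.prod_eq_zero (Finset.mem_univ j) ?_
  rw [show g j = f j by rw [Pi.add_apply, Pi.one_apply] at hj; omega, Ymat_self]

theorem zpow_one_sub_mul_kronPow_Ymat_add_one (f : NState n) :
    I ^ ((1 : ℤ) - n) * kronPow Ymat (f + 1) f = Ymat (∑ j, f j + 1) (∑ j, f j) := by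
  have h := mul_prod_Ymat_add_one Finset.univ f
  rw [Finset.card_univ, Fintype.card_fin] at h
  calc I ^ ((1 : ℤ) - n) * kronPow Ymat (f + 1) f
      = I ^ (-(n : ℤ)) * (I * ∏ j, Ymat (f j + 1) (f j)) := by
        rw [sub_eq_neg_add, zpow_add₀ I_ne_zero, zpow_one, mul_assoc, kronPow]
        rfl
    _ = Ymat (∑ j, f j + 1) (∑ j, f j) := by
        rw [h, ← mul_assoc, _root_.zpow_neg, zpow_natCast,
          inv_mul_cancel₀ (pow_ne_zero _ I_ne_zero), one_mul]

theorem onFirst_Ymat_apply_of_flip (hn : 0 < n) {σ : NState n → NState n} (hσ : Injective σ)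
    (hflip : ∀ f, σ (f + 1) = σ f + Pi.single ⟨0, hn⟩ 1)
    (hsum : ∀ f, σ f ⟨0, hn⟩ = ∑ j, f j) (g f : NState n) :
    onFirst hn Ymat (σ g) (σ f) = I ^ ((1 : ℤ) - n) * kronPow Ymat g f := by
  rw [onFirst_apply_of_flip hn Ymat hσ hflip, hsum]
  split_ifs with hgf hg
  · have hne : f ≠ f + 1 := fun h => by
      have := congr_fun h ⟨0, hn⟩
      rw [Pi.add_apply, Pi.one_apply] at this
      omega
    rw [Ymat_self, hgf, kronPow_Ymat_eq_zero hne, mul_zero]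
  · rw [hg, zpow_one_sub_mul_kronPow_Ymat_add_one]
  · rw [kronPow_Ymat_eq_zero hg, mul_zero]

end PauliY

theorem conjTranspose_permMat_mul_onFirst_Ymat_mul_permMat {n : ℕ} (hn : 0 < n)
    {σ : NState n → NState n} (hσ : Injective σ)
    (hflip : ∀ f, σ (f + 1) = σ f + Pi.single ⟨0, hn⟩ 1)
    (hsum : ∀ f, σ f ⟨0, hn⟩ = ∑ j, f j) :
    (permMat σ)ᴴ * onFirst hn Ymat * permMat σ = Complex.I ^ ((1 : ℤ) - n) • kronPow Ymat := by
  ext g f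
  rw [conjTranspose_permMat_mul_mul_permMat_apply, Matrix.smul_apply, smul_eq_mul]
  exact onFirst_Ymat_apply_of_flip hn hσ hflip hsum g f

theorem I_zpow_one_sub_eq_one {n : ℕ} (h : n % 4 = 1) : Complex.I ^ ((1 : ℤ) - n) = 1 := by
  rw [show (1 : ℤ) - n = 4 * (-(n / 4 : ℕ) : ℤ) by omega, _root_.zpow_mul, zpow_ofNat,
    Complex.I_pow_four, _root_.one_zpow]

/-- **Transversality of the logical Y operator.**
For odd positive `n` and the `n`-qubit encoding unitary `U`,
`U†·(Y ⊗ I^{⊗(n−1)})·U = i^{1−n}·Y^{⊗n}`; in particular if `n ≡ 1 (mod 4)` then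
`U†·(Y ⊗ I^{⊗(n−1)})·U = Y^{⊗n}` and also `U·(Y ⊗ I^{⊗(n−1)})·U† = Y^{⊗n}`. -/
theorem logical_Y_transversal (n : ℕ) (hn : 0 < n) (hodd : Odd n) :
    (encU n hn)ᴴ * onFirst hn Ymat * encU n hn =
        (Complex.I ^ ((1 : ℤ) - (n : ℤ))) • kronPow Ymat ∧
      (n % 4 = 1 →
        (encU n hn)ᴴ * onFirst hn Ymat * encU n hn = kronPow Ymat ∧
          encU n hn * onFirst hn Ymat * (encU n hn)ᴴ = kronPow Ymat) := by
  set z : Fin n := ⟨0, hn⟩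
  have hleft := decodeState_encodeState hodd z
  have hright := encodeState_decodeState hodd z
  have hU : encU n hn = (permMat (decodeState z))ᴴ := by
    rw [encU_eq_permMat, conjTranspose_permMat hright hleft]
  have hdecode : encU n hn * onFirst hn Ymat * (encU n hn)ᴴ =
      Complex.I ^ ((1 : ℤ) - n) • kronPow Ymat := by
    rw [hU, conjTranspose_conjTranspose]
    exact conjTranspose_permMat_mul_onFirst_Ymat_mul_permMat hn hright.injective
      (decodeState_add_one hodd z) (decodeState_apply_self z)
  have hencode : (encU n hn)ᴴ * onFirst hn Ymat * encU n hn =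
      Complex.I ^ ((1 : ℤ) - n) • kronPow Ymat := by
    rw [encU_eq_permMat]
    exact conjTranspose_permMat_mul_onFirst_Ymat_mul_permMat hn hleft.injective
      (encodeState_add_one hodd z) (encodeState_apply_self z)
  refine ⟨hencode, fun h4 => ?_⟩
  rw [hencode, hdecode, I_zpow_one_sub_eq_one h4, one_smul]
  exact ⟨rfl, rfl⟩

end
end

section
/- Pauli support of an encoded single row: let n ≡ 1 (mod 4) be a positive integer, let U be the n-qubit encoding unitary, and let ψ be any 2×2 complex matrix. Then U·(ψ ⊗ (I/2)^{⊗(n−1)})·U† = 2^{−n} · Σ_{k=0}^{3} tr(σ_k ψ) · σ_k^{⊗n}, where σ_0 = I, σ_1 = X, σ_2 = Y, σ_3 = Z. -/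
open Matrix

noncomputable section

/-- The Pauli matrices `σ₀ = I`, `σ₁ = X`, `σ₂ = Y`, `σ₃ = Z`. -/
def pauli : Fin 4 → Matrix (Fin 2) (Fin 2) ℂ := ![1, Xmat, Ymat, Zmat]

/-- `ψ ⊗ (I/2)^{⊗(n−1)}`: the single-qubit operator `ψ` on qubit 1 tensored with the
maximally mixed state on qubits `2,…,n`. -/
def mixExt (n : ℕ) (hn : 0 < n) (ψ : Matrix (Fin 2) (Fin 2) ℂ) : NMat n :=
  fun g f => ψ (g ⟨0, hn⟩) (f ⟨0, hn⟩) *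
    (if ∀ j : Fin n, j ≠ ⟨0, hn⟩ → g j = f j then ((1 : ℂ) / 2) ^ (n - 1) else 0)


/-! The encoding unitary is a permutation matrix. For odd `n`, row `g` of `U` has its `1` in the
column whose first qubit is the parity `∑ j, g j` and whose qubit `j ≠ 0` is `g j + g 0`
(`decodeMap`), so conjugating by `U` reads a matrix at `decodeMap` on both sides.

Expanding `ψ` in the Pauli basis reduces the claim to `U (σ ⊗ I) U† = σ^{⊗n}` for each Pauli `σ`.
Every Pauli matrix has the shape `σ a b = [b = a + c] · u · ε a` with a shift `c`, a phase
`u ∈ {1, -i}` and an additive character `ε`. Both sides are then supported on the pairs `(g, g + c)`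
(for odd `n`, shifting every qubit by `c` shifts the parity by `c`), with values `u · ε (∑ g)` and
`u ^ n · ε (∑ g)` respectively; these agree since `u ^ 4 = 1` and `n ≡ 1 (mod 4)`. -/

namespace Matrix

variable {ι m n α : Type*} [Fintype n] [DecidableEq n]

theorem one_submatrix_id_mul [NonAssocSemiring α] (ρ : m → n) (M : Matrix n n α) :
    (1 : Matrix n n α).submatrix ρ id * M = M.submatrix ρ id := by
  ext g f
  simp [mul_apply, one_apply]

theorem one_submatrix_mul_mul_conjTranspose [Semiring α] [StarRing α] (ρ : n → n)
    (M : Matrix n n α) :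
    (1 : Matrix n n α).submatrix ρ id * M * ((1 : Matrix n n α).submatrix ρ id)ᴴ =
      M.submatrix ρ ρ := by
  ext g f
  simp [conjTranspose_submatrix, mul_apply, one_apply]

theorem list_prod_map_one_submatrix [NonAssocSemiring α] (ρ : ι → n → n) (l : List ι) :
    (l.map fun j => (1 : Matrix n n α).submatrix (ρ j) id).prod =
      (1 : Matrix n n α).submatrix (fun g => l.foldl (fun h j => ρ j h) g) id := by
  induction l with
  | nil => exact (submatrix_id_id _).symm
  | cons a l ih => simp [ih, one_submatrix_id_mul, Function.comp_def]

end Matrix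

theorem AddChar.map_finset_sum {ι A M : Type*} [AddCommMonoid A] [CommMonoid M]
    (ψ : AddChar A M) (s : Finset ι) (f : ι → A) :
    ψ (∑ i ∈ s, f i) = ∏ i ∈ s, ψ (f i) := by
  induction s using Finset.cons_induction with
  | empty => simp
  | cons a s ha ih => rw [Finset.sum_cons, Finset.prod_cons, map_add_eq_mul, ih]

theorem fin_two_add_self : ∀ x : Fin 2, x + x = 0 := by decide

theorem Odd.nsmul_fin_two {n : ℕ} (hn : Odd n) (x : Fin 2) : n • x = x := by
  obtain ⟨k, rfl⟩ := hn
  rw [add_nsmul, mul_nsmul, two_nsmul, fin_two_add_self, nsmul_zero, zero_add, one_nsmul]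

def cnotMap {n : ℕ} (c t : Fin n) (f : NState n) : NState n :=
  Function.update f t (f t + f c)

theorem cnotMap_involutive {n : ℕ} {c t : Fin n} (h : c ≠ t) :
    Function.Involutive (cnotMap c t) := by
  intro f
  simp [cnotMap, Function.update_of_ne h, add_assoc, fin_two_add_self]

theorem nCNOT_eq_one_submatrix {n : ℕ} {c t : Fin n} (h : c ≠ t) :
    nCNOT c t = (1 : NMat n).submatrix (cnotMap c t) id := by
  ext g f
  simp only [nCNOT, submatrix_apply, one_apply, id, (cnotMap_involutive h).eq_iff]
  rfl

section Folds

variable {n : ℕ} (z : Fin n)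

theorem foldl_cnotMap_fanout {l : List (Fin n)} (hl : l.Nodup) (g : NState n) :
    l.foldl (fun h j => (if j = z then id else cnotMap z j) h) g =
      fun i => if i ≠ z ∧ i ∈ l then g i + g z else g i := by
  induction l generalizing g with
  | nil => simp
  | cons a l ih =>
    obtain ⟨hal, hl⟩ := List.nodup_cons.mp hl
    rw [List.foldl_cons, ih hl]
    funext i
    by_cases ha : a = z
    · subst ha; by_cases hi : i = a <;> simp [hi]
    · have hz : cnotMap z a g z = g z := Function.update_of_ne (Ne.symm ha) _ _
      simp only [ha, if_false, hz]
      by_cases hia : i = a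
      · subst hia; simp [hal, ha, cnotMap]
      · simp [hia, cnotMap]

theorem foldl_cnotMap_fanin (l : List (Fin n)) (g : NState n) :
    l.foldl (fun h j => (if j = z then id else cnotMap j z) h) g =
      Function.update g z (g z + (l.map fun j => if j = z then 0 else g j).sum) := by
  induction l generalizing g with
  | nil => simp
  | cons a l ih =>
    rw [List.foldl_cons, ih]
    by_cases ha : a = z
    · simp [ha]
    · have hsum : (l.map fun j => if j = z then 0 else cnotMap a z g j) =
          l.map fun j => if j = z then 0 else g j :=
        List.map_congr_left fun j _ => by
          split_ifs with hj
          · rfl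
          · exact Function.update_of_ne hj _ _
      simp only [ha, if_false]
      rw [hsum]
      simp only [cnotMap, Function.update_idem, Function.update_self,
        List.map_cons, List.sum_cons, add_assoc, ha, if_false]

end Folds

def decodeMap {n : ℕ} (hn : 0 < n) (g : NState n) : NState n :=
  fun i => if i = ⟨0, hn⟩ then ∑ j, g j else g i + g ⟨0, hn⟩

theorem decodeMap_apply_of_ne {n : ℕ} {hn : 0 < n} {j : Fin n} (hj : j ≠ ⟨0, hn⟩)
    (g : NState n) : decodeMap hn g j = g j + g ⟨0, hn⟩ :=
  if_neg hj

theorem encU_eq_one_submatrix_decodeMap {n : ℕ} (hn : 0 < n) (hodd : Odd n) :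
    encU n hn = (1 : NMat n).submatrix (decodeMap hn) id := by
  set z : Fin n := ⟨0, hn⟩
  have fanout : (fun j => if j = z then (1 : NMat n) else nCNOT z j) =
      fun j => (1 : NMat n).submatrix (if j = z then id else cnotMap z j) id := by
    funext j
    split_ifs with hj
    exacts [(submatrix_id_id 1).symm, nCNOT_eq_one_submatrix (Ne.symm hj)]
  have fanin : (fun j => if j = z then (1 : NMat n) else nCNOT j z) =
      fun j => (1 : NMat n).submatrix (if j = z then id else cnotMap j z) id := by
    funext j
    split_ifs with hj
    exacts [(submatrix_id_id 1).symm, nCNOT_eq_one_submatrix hj]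
  rw [encU, fanout, fanin, list_prod_map_one_submatrix, list_prod_map_one_submatrix,
    one_submatrix_id_mul, submatrix_submatrix]
  congr 1
  funext g i
  simp only [Function.comp_apply, foldl_cnotMap_fanout z (List.nodup_finRange n),
    foldl_cnotMap_fanin, List.mem_finRange, and_true, ← Fin.sum_univ_def]
  show _ = if i = z then ∑ j, g j else g i + g z
  by_cases hi : i = z
  · -- the summand at `j = z` is `g z + g z = 0` anyway
    have hterm : ∀ j, (if j = z then 0 else if j ≠ z then g j + g z else g j) = g j + g z := by
      intro j
      split_ifs with hj <;> simp_all [fin_two_add_self]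
    simp only [hi, Function.update_self, if_true, ne_eq, not_true_eq_false,
      if_false, hterm, Finset.sum_add_distrib, Finset.sum_const, Finset.card_univ,
      Fintype.card_fin, hodd.nsmul_fin_two]
    rw [add_left_comm, fin_two_add_self, add_zero]
  · simp [hi]

section ShiftMatrices

variable {n : ℕ} {G : Matrix (Fin 2) (Fin 2) ℂ} {c : Fin 2} {u : ℂ} {ε : AddChar (Fin 2) ℂ}

theorem kronPow_apply_of_shift (hG : ∀ a b, G a b = if b = a + c then u * ε a else 0)
    (g f : NState n) :
    kronPow G g f = if f = (fun j => g j + c) then u ^ n * ε (∑ j, g j) else 0 := by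
  simp only [kronPow, hG, Fintype.prod_ite_zero, funext_iff, Finset.prod_mul_distrib,
    Finset.prod_const, Finset.card_univ, Fintype.card_fin, AddChar.map_finset_sum]

theorem onFirst_decodeMap_apply_of_shift (hn : 0 < n) (hodd : Odd n)
    (hG : ∀ a b, G a b = if b = a + c then u * ε a else 0) (g f : NState n) :
    onFirst hn G (decodeMap hn g) (decodeMap hn f) =
      if f = (fun j => g j + c) then u * ε (∑ j, g j) else 0 := by
  show G (∑ j, g j) (∑ j, f j) *
    (if ∀ j, j ≠ ⟨0, hn⟩ → decodeMap hn g j = decodeMap hn f j then 1 else 0) = _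
  by_cases hshift : ∃ d, f = fun j => g j + d
  · obtain ⟨d, rfl⟩ := hshift
    have hcond : ∀ j, j ≠ ⟨0, hn⟩ → decodeMap hn g j = decodeMap hn (fun j => g j + d) j := by
      intro j hj
      rw [decodeMap_apply_of_ne hj, decodeMap_apply_of_ne hj, add_add_add_comm,
        fin_two_add_self, add_zero]
    have hsum : ∑ j, (g j + d) = ∑ j, g j + d := by
      rw [Finset.sum_add_distrib, Finset.sum_const, Finset.card_univ, Fintype.card_fin,
        hodd.nsmul_fin_two]
    have hd : d = c ↔ (fun j => g j + d) = (fun j => g j + c) := by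
      simp only [funext_iff, add_right_inj]
      exact ⟨fun h _ => h, fun h => h ⟨0, hn⟩⟩
    rw [if_pos hcond, mul_one, hsum, hG]
    exact if_congr ((add_right_inj _).trans hd) rfl rfl
  · have hcond : ¬ ∀ j, j ≠ ⟨0, hn⟩ → decodeMap hn g j = decodeMap hn f j := by
      refine fun h => hshift ⟨g ⟨0, hn⟩ + f ⟨0, hn⟩, funext fun j => ?_⟩
      by_cases hj : j = ⟨0, hn⟩
      · subst hj; rw [← add_assoc, fin_two_add_self, zero_add]
      · have hgf := h j hj
        rw [decodeMap_apply_of_ne hj, decodeMap_apply_of_ne hj] at hgf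
        rw [← add_assoc, hgf, add_assoc, fin_two_add_self, add_zero]
    rw [if_neg hcond, mul_zero, if_neg fun h => hshift ⟨c, h⟩]

end ShiftMatrices

def signChar : AddChar (Fin 2) ℂ where
  toFun a := if a = 0 then 1 else -1
  map_zero_eq_one' := if_pos rfl
  map_add_eq_mul' a b := by fin_cases a <;> fin_cases b <;> simp

theorem pauli_eq_shift (k : Fin 4) :
    ∃ (c : Fin 2) (u : ℂ) (ε : AddChar (Fin 2) ℂ),
      u ^ 4 = 1 ∧ ∀ a b, pauli k a b = if b = a + c then u * ε a else 0 := by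
  have hY : (-Complex.I) ^ 4 = 1 := by rw [Even.neg_pow (by decide), Complex.I_pow_four]
  fin_cases k <;>
    [refine ⟨0, 1, 1, one_pow 4, ?_⟩; refine ⟨1, 1, 1, one_pow 4, ?_⟩;
      refine ⟨1, -Complex.I, signChar, hY, ?_⟩; refine ⟨0, 1, signChar, one_pow 4, ?_⟩] <;>
    intro a b <;> fin_cases a <;> fin_cases b <;> simp [pauli, Xmat, Ymat, Zmat, signChar]

theorem encU_mul_onFirst_pauli_mul_conjTranspose {n : ℕ} (hn : 0 < n) (h4 : n % 4 = 1)
    (k : Fin 4) : encU n hn * onFirst hn (pauli k) * (encU n hn)ᴴ = kronPow (pauli k) := by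
  have hodd : Odd n := Nat.odd_iff.mpr (by omega)
  obtain ⟨c, u, ε, hu, hG⟩ := pauli_eq_shift k
  have hun : u ^ n = u := by
    rw [← Nat.div_add_mod n 4, h4, pow_add, pow_mul, hu, one_pow, one_mul, pow_one]
  rw [encU_eq_one_submatrix_decodeMap hn hodd, one_submatrix_mul_mul_conjTranspose]
  ext g f
  rw [submatrix_apply, onFirst_decodeMap_apply_of_shift hn hodd hG, kronPow_apply_of_shift hG,
    hun]

theorem pauli_expansion (ψ : Matrix (Fin 2) (Fin 2) ℂ) :
    ψ = (1 / 2 : ℂ) • ∑ k, (pauli k * ψ).trace • pauli k := by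
  ext a b
  fin_cases a <;> fin_cases b <;>
    simp [Fin.sum_univ_four, pauli, Xmat, Ymat, Zmat, trace, mul_apply, Fin.sum_univ_two] <;>
    ring_nf <;> simp only [Complex.I_sq] <;> ring

theorem onFirst_eq_pauli_sum {n : ℕ} (hn : 0 < n) (ψ : Matrix (Fin 2) (Fin 2) ℂ) :
    onFirst hn ψ = (1 / 2 : ℂ) • ∑ k, (pauli k * ψ).trace • onFirst hn (pauli k) := by
  conv_lhs => rw [pauli_expansion ψ]
  ext g f
  simp only [onFirst, Matrix.smul_apply, Matrix.sum_apply, smul_eq_mul, Finset.sum_mul, mul_assoc]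

theorem mixExt_eq_smul_onFirst {n : ℕ} (hn : 0 < n) (ψ : Matrix (Fin 2) (Fin 2) ℂ) :
    mixExt n hn ψ = ((1 : ℂ) / 2) ^ (n - 1) • onFirst hn ψ := by
  ext g f
  simp only [mixExt, onFirst, Matrix.smul_apply, smul_eq_mul, mul_ite, mul_one, mul_zero]
  split_ifs <;> ring

/-- **Pauli support of an encoded single row.**
For `n ≡ 1 (mod 4)` positive, the `n`-qubit encoding unitary `U`, and any 2×2 complex
matrix `ψ`: `U·(ψ ⊗ (I/2)^{⊗(n−1)})·U† = 2^{−n} · Σ_{k=0}^{3} tr(σ_k ψ) · σ_k^{⊗n}`. -/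
theorem encoded_row_pauli_support (n : ℕ) (hn : 0 < n) (h4 : n % 4 = 1)
    (ψ : Matrix (Fin 2) (Fin 2) ℂ) :
    encU n hn * mixExt n hn ψ * (encU n hn)ᴴ =
      ((1 : ℂ) / 2 ^ n) • ∑ k : Fin 4, (pauli k * ψ).trace • kronPow (pauli k) := by
  have hscalar : ((1 : ℂ) / 2) ^ (n - 1) * (1 / 2) = 1 / 2 ^ n := by
    rw [← pow_succ, Nat.sub_add_cancel hn, _root_.one_div_pow]
  rw [mixExt_eq_smul_onFirst, onFirst_eq_pauli_sum]
  simp only [Matrix.mul_smul, Matrix.smul_mul, Matrix.mul_sum, Matrix.sum_mul,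
    encU_mul_onFirst_pauli_mul_conjTranspose hn h4, smul_smul, hscalar]

end
end
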